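/- For every integer p ≥ 4, the reflector R_p has bandwidth exactly p, i.e., B(R_p) = p; moreover its local density is p (the subgraph obtained by deleting the peripheral vertices has 4p + 1 vertices and diameter 4). -/

import Mathlib

/-- The bandwidth of an integer labeling `f` of the vertices of `G`:
the maximum of `|f u - f v|` over edges `uv` of `G`. -/
noncomputable def bwOf {V : Type*} (G : SimpleGraph V) (f : V → ℤ) : ℕ :=
  sSup {n | ∃ u v, G.Adj u v ∧ n = (f u - f v).natAbs}

/-- The bandwidth of a graph: the minimum of `bwOf G f` over injections `f : V → ℤ`. -/
noncomputable def bandwidth {V : Type*} (G : SimpleGraph V) : ℕ :=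
  sInf {n | ∃ f : V → ℤ, Function.Injective f ∧ n = bwOf G f}

/-- The local density of a graph: the maximum of `⌈(n(H) - 1)/diam H⌉` over connected
subgraphs `H` of `G` with at least two vertices. -/
noncomputable def localDensity {V : Type*} (G : SimpleGraph V) : ℕ :=
  sSup {d | ∃ H : G.Subgraph, H.coe.Connected ∧ 2 ≤ H.verts.ncard ∧
    d = (H.verts.ncard - 1) ⌈/⌉ H.coe.diam}

/-- Underlying asymmetric relation for the reflector `Rgraph p`.
Spine vertices (`Fin 7`): `0 = a`, `1 = b`, `2 = c₀`, `3 = w`, `4 = x`, `5 = y`, `6 = z`,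
consecutive ones adjacent.  Tagged vertices `(t, _) : Fin 3 × Fin (p-2)`: `t = 0` gives the
`p - 2` leaves of `b`, `t = 1` the `p - 2` leaves of `y`, and `t = 2` the extra vertices
`c₁, …, c_{p-2}` which together with `c₀` and `w` induce a complete graph.  Tagged vertices
`(s, i) : Fin 2 × Fin p`: `s = 0` gives the vertices `wᵢ` adjacent to `w` and `s = 1` the
vertices `wᵢ'` adjacent to `wᵢ` (the `p` grown paths of length 2). -/
def RRel (p : ℕ) : Fin 7 ⊕ ((Fin 3 × Fin (p - 2)) ⊕ (Fin 2 × Fin p)) →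
    Fin 7 ⊕ ((Fin 3 × Fin (p - 2)) ⊕ (Fin 2 × Fin p)) → Prop
  | Sum.inl i, Sum.inl j => j.val = i.val + 1
  | Sum.inl i, Sum.inr (Sum.inl (t, _)) =>
      (t = 0 ∧ i = 1) ∨ (t = 1 ∧ i = 5) ∨ (t = 2 ∧ (i = 2 ∨ i = 3))
  | Sum.inl i, Sum.inr (Sum.inr (s, _)) => s = 0 ∧ i = 3
  | Sum.inr (Sum.inl (t, _)), Sum.inr (Sum.inl (t', _)) => t = 2 ∧ t' = 2
  | Sum.inr (Sum.inr (s, a)), Sum.inr (Sum.inr (s', b)) => s = 0 ∧ s' = 1 ∧ a = b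
  | _, _ => False

/-- The reflector `R_p` of thickness `p`, on `5p + 1` vertices.  Its peripheral
vertices are `a = Sum.inl 0` and `z = Sum.inl 6`. -/
def Rgraph (p : ℕ) : SimpleGraph (Fin 7 ⊕ ((Fin 3 × Fin (p - 2)) ⊕ (Fin 2 × Fin p))) :=
  SimpleGraph.fromRel (RRel p)

/-! ### A bandwidth-`p` labeling of the reflector -/

/-- spine labels for `a, b, c₀, w, x, y, z`. -/
def spineLabel (p : ℕ) (i : Fin 7) : ℤ :=
  if i.val = 0 then -((p:ℤ)+3) else if i.val = 1 then -((p:ℤ)+2) else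
  if i.val = 2 then -(p:ℤ)+1 else if i.val = 3 then 0 else
  if i.val = 4 then (p:ℤ) else if i.val = 5 then 2*(p:ℤ) else 2*(p:ℤ)+1

/-- An optimal labeling of the reflector. -/
def lab (p : ℕ) : Fin 7 ⊕ ((Fin 3 × Fin (p - 2)) ⊕ (Fin 2 × Fin p)) → ℤ
  | Sum.inl i => spineLabel p i
  | Sum.inr (Sum.inl (t, j)) =>
      if t.val = 0 then -((p:ℤ)+4) - j.val
      else if t.val = 1 then 2*(p:ℤ)+2 + j.val
      else -(p:ℤ)+2 + j.val
  | Sum.inr (Sum.inr (s, i)) =>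
      if s.val = 0 then (if i.val < p-1 then (i.val:ℤ)+1 else -(p:ℤ))
      else (if i.val < p-1 then (i.val:ℤ)+1+(p:ℤ) else -((p:ℤ)+1))

lemma RRel_bound {p : ℕ} (hp : 4 ≤ p) {u v} (h : RRel p u v) :
    (lab p u - lab p v).natAbs ≤ p := by
  rcases u with i | (⟨t, j⟩ | ⟨s, i⟩) <;> rcases v with i' | (⟨t', j'⟩ | ⟨s', i'⟩) <;>
    simp only [RRel] at h
  · fin_cases i <;> fin_cases i' <;> simp_all [lab, spineLabel] <;> omega
  · have := j'.isLt
    rcases h with ⟨rfl, rfl⟩ | ⟨rfl, rfl⟩ | ⟨rfl, rfl | rfl⟩ <;>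
      simp [lab, spineLabel] <;> omega
  · have := i'.isLt
    obtain ⟨rfl, rfl⟩ := h
    simp only [lab, spineLabel]
    norm_num
    split_ifs <;> omega
  · have := j.isLt; have := j'.isLt
    obtain ⟨rfl, rfl⟩ := h
    simp only [lab]
    norm_num
    omega
  · have := i.isLt
    obtain ⟨rfl, rfl, rfl⟩ := h
    simp only [lab]
    norm_num
    split_ifs <;> omega

set_option maxHeartbeats 1000000 in
lemma lab_inj {p : ℕ} (hp : 4 ≤ p) : Function.Injective (lab p) := by
  intro u v h
  rcases u with i | (⟨t, j⟩ | ⟨s, i⟩) <;> rcases v with i' | (⟨t', j'⟩ | ⟨s', i'⟩) <;>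
    simp only [lab, spineLabel] at h
  · have h1 := i.isLt; have h2 := i'.isLt
    simp only [Sum.inl.injEq, Fin.ext_iff]
    split_ifs at h <;> omega
  · exfalso; have h1 := i.isLt; have h2 := j'.isLt; have h3 := t'.isLt
    split_ifs at h <;> omega
  · exfalso; have h1 := i.isLt; have h2 := i'.isLt; have h3 := s'.isLt
    split_ifs at h <;> omega
  · exfalso; have h1 := i'.isLt; have h2 := j.isLt; have h3 := t.isLt
    split_ifs at h <;> omega
  · have h1 := j.isLt; have h2 := j'.isLt; have h3 := t.isLt; have h4 := t'.isLt
    simp only [Sum.inr.injEq, Sum.inl.injEq, Prod.mk.injEq, Fin.ext_iff]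
    split_ifs at h <;> omega
  · exfalso; have h1 := j.isLt; have h2 := i'.isLt; have h3 := t.isLt; have h4 := s'.isLt
    split_ifs at h <;> omega
  · exfalso; have h1 := i'.isLt; have h2 := i.isLt; have h3 := s.isLt
    split_ifs at h <;> omega
  · exfalso; have h1 := i.isLt; have h2 := j'.isLt; have h3 := s.isLt; have h4 := t'.isLt
    split_ifs at h <;> omega
  · have h1 := i.isLt; have h2 := i'.isLt; have h3 := s.isLt; have h4 := s'.isLt
    simp only [Sum.inr.injEq, Prod.mk.injEq, Fin.ext_iff]
    split_ifs at h <;> omega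

lemma lab_bound {p : ℕ} (hp : 4 ≤ p) {u v} (h : (Rgraph p).Adj u v) :
    (lab p u - lab p v).natAbs ≤ p := by
  rw [Rgraph, SimpleGraph.fromRel_adj] at h
  rcases h.2 with h' | h'
  · exact RRel_bound hp h'
  · rw [← Int.natAbs_neg, neg_sub]; exact RRel_bound hp h'

/-! ### The closed neighborhood of `w`: `2p + 1` vertices -/

/-- Enumeration of `w` (at `k = 0`) and its `2p` neighbors. -/
def vtx (p : ℕ) (k : Fin (2*p+1)) : Fin 7 ⊕ ((Fin 3 × Fin (p - 2)) ⊕ (Fin 2 × Fin p)) :=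
  if h0 : k.val = 0 then Sum.inl 3
  else if h1 : k.val = 1 then Sum.inl 2
  else if h2 : k.val = 2 then Sum.inl 4
  else if h3 : k.val < p+1 then Sum.inr (Sum.inl (2, ⟨k.val - 3, by omega⟩))
  else Sum.inr (Sum.inr (0, ⟨k.val - (p+1), by have := k.isLt; omega⟩))

lemma vtx_inj (p : ℕ) : Function.Injective (vtx p) := by
  intro k k' h
  unfold vtx at h
  split_ifs at h <;>
    (try simp only [Sum.inl.injEq, Sum.inr.injEq, Prod.mk.injEq, Fin.mk.injEq] at h) <;>
    (try simp at h) <;> (apply Fin.ext; omega)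

lemma vtx_adj {p : ℕ} (k : Fin (2*p+1)) (hk : k.val ≠ 0) :
    (Rgraph p).Adj (Sum.inl 3) (vtx p k) := by
  rw [Rgraph, SimpleGraph.fromRel_adj]
  unfold vtx
  split_ifs with h0 h1 h2 h3
  · omega
  · exact ⟨by simp, Or.inr (by simp only [RRel]; decide)⟩
  · exact ⟨by simp, Or.inl (by simp only [RRel]; decide)⟩
  · exact ⟨by simp, Or.inl (Or.inr (Or.inr ⟨rfl, Or.inr rfl⟩))⟩
  · exact ⟨by simp, Or.inl ⟨rfl, rfl⟩⟩

lemma vtx_zero (p : ℕ) : vtx p 0 = Sum.inl 3 := by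
  unfold vtx; rw [dif_pos] <;> simp

lemma vtx_ne_w {p : ℕ} (k : Fin (2*p+1)) (hk : k.val ≠ 0) : vtx p k ≠ Sum.inl 3 :=
  (vtx_adj k hk).ne'

/-! ### Generalities about `bwOf` -/

lemma bwOf_le {V : Type*} (G : SimpleGraph V) (f : V → ℤ) {m : ℕ}
    (h : ∀ u v, G.Adj u v → (f u - f v).natAbs ≤ m) : bwOf G f ≤ m :=
  csSup_le' (by rintro n ⟨u, v, hadj, rfl⟩; exact h u v hadj)

lemma le_bwOf {V : Type*} [Finite V] (G : SimpleGraph V) (f : V → ℤ) {u v : V}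
    (h : G.Adj u v) : (f u - f v).natAbs ≤ bwOf G f := by
  refine le_csSup ?_ ⟨u, v, h, rfl⟩
  refine Set.Finite.bddAbove (Set.Finite.subset
    (Set.finite_range fun q : V × V => (f q.1 - f q.2).natAbs) ?_)
  rintro n ⟨a, b, _, rfl⟩; exact ⟨(a, b), rfl⟩

lemma p_le_bwOf {p : ℕ} (hp : 4 ≤ p) (f : _ → ℤ) (hf : Function.Injective f) :
    p ≤ bwOf (Rgraph p) f := by
  set B := bwOf (Rgraph p) f with hB
  have key : ∀ k : Fin (2*p+1),
      f (vtx p k) ∈ Finset.Icc (f (Sum.inl 3) - B) (f (Sum.inl 3) + B) := by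
    intro k
    rcases eq_or_ne k.val 0 with h0 | h0
    · have hk : vtx p k = Sum.inl 3 := by unfold vtx; rw [dif_pos h0]
      rw [hk, Finset.mem_Icc]; omega
    · have h1 := le_bwOf (Rgraph p) f (vtx_adj k h0)
      rw [Finset.mem_Icc]; omega
  have hcard := Finset.card_le_card_of_injOn (s := (Finset.univ : Finset (Fin (2*p+1))))
    (t := Finset.Icc (f (Sum.inl 3) - (B:ℤ)) (f (Sum.inl 3) + B)) (fun k => f (vtx p k))
    (fun k _ => key k) ((hf.comp (vtx_inj p)).injOn)
  simp only [Finset.card_univ, Fintype.card_fin, Int.card_Icc] at hcard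
  omega

/-! ### The star subgraph at `w` -/

/-- The star at `w` together with its `2p` neighbors, as a subgraph of the reflector. -/
def starSub (p : ℕ) : (Rgraph p).Subgraph where
  verts := Set.range (vtx p)
  Adj u v := (u = Sum.inl 3 ∧ ∃ k : Fin (2*p+1), k.val ≠ 0 ∧ v = vtx p k) ∨
    (v = Sum.inl 3 ∧ ∃ k : Fin (2*p+1), k.val ≠ 0 ∧ u = vtx p k)
  adj_sub := by
    rintro u v (⟨rfl, k, hk, rfl⟩ | ⟨rfl, k, hk, rfl⟩)
    · exact vtx_adj k hk
    · exact (vtx_adj k hk).symm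
  edge_vert := by
    rintro u v (⟨rfl, _⟩ | ⟨_, k, _, rfl⟩)
    · exact ⟨0, vtx_zero p⟩
    · exact ⟨k, rfl⟩
  symm := ⟨fun u v h => h.symm⟩

lemma starSub_ncard {p : ℕ} : (starSub p).verts.ncard = 2*p+1 := by
  rw [starSub, ← Nat.card_coe_set_eq, Nat.card_range_of_injective (vtx_inj p)]
  simp

lemma starSub_conn {p : ℕ} : (starSub p).coe.Connected := by
  have hw : Sum.inl 3 ∈ (starSub p).verts := ⟨0, vtx_zero p⟩
  have reach : ∀ u : (starSub p).verts, (starSub p).coe.Reachable u ⟨Sum.inl 3, hw⟩ := by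
    rintro ⟨u, k, hk⟩
    rcases eq_or_ne k.val 0 with h0 | h0
    · have hk0 : vtx p k = Sum.inl 3 := by unfold vtx; rw [dif_pos h0]
      have : u = Sum.inl 3 := by rw [← hk, hk0]
      subst this; rfl
    · refine SimpleGraph.Adj.reachable ?_
      exact Or.inr ⟨rfl, k, h0, hk.symm⟩
  rw [SimpleGraph.connected_iff]
  exact ⟨fun u v => (reach u).trans (reach v).symm, ⟨⟨Sum.inl 3, hw⟩⟩⟩

lemma starSub_not_adj {p : ℕ} (hp : 4 ≤ p) :
    ∃ u v : (starSub p).verts, u ≠ v ∧ ¬ (starSub p).coe.Adj u v := by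
  have h1 : (1 : Fin (2*p+1)).val = 1 := by
    rw [Fin.val_one']; exact Nat.mod_eq_of_lt (by omega)
  have hlt : p + 1 < 2*p+1 := by omega
  refine ⟨⟨vtx p 1, ⟨1, rfl⟩⟩, ⟨vtx p ⟨p+1, hlt⟩, ⟨_, rfl⟩⟩, ?_, ?_⟩
  · intro hcon
    have h2 : vtx p 1 = vtx p ⟨p+1, hlt⟩ := congrArg Subtype.val hcon
    have h3 := Fin.ext_iff.mp (vtx_inj p h2)
    have h4 : ((⟨p+1, hlt⟩ : Fin (2*p+1))).val = p+1 := rfl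
    omega
  · rintro (⟨hcon, _⟩ | ⟨hcon, _⟩)
    · exact vtx_ne_w 1 (by rw [h1]; omega) hcon
    · exact vtx_ne_w ⟨p+1, hlt⟩ (Nat.succ_ne_zero p) hcon

lemma starSub_diam {p : ℕ} (hp : 4 ≤ p) : (starSub p).coe.diam = 2 := by
  have hw : Sum.inl 3 ∈ (starSub p).verts := ⟨0, vtx_zero p⟩
  haveI : Nonempty (starSub p).verts := ⟨⟨Sum.inl 3, hw⟩⟩
  have adjw : ∀ u : (starSub p).verts, u.1 ≠ Sum.inl 3 →
      (starSub p).coe.Adj u ⟨Sum.inl 3, hw⟩ := by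
    rintro ⟨u, k, hk⟩ hne
    refine Or.inr ⟨rfl, k, ?_, hk.symm⟩
    intro h0
    have hk0 : vtx p k = Sum.inl 3 := by unfold vtx; rw [dif_pos h0]
    exact hne (show u = Sum.inl 3 from hk ▸ hk0)
  have hle : (starSub p).coe.ediam ≤ 2 := by
    refine SimpleGraph.ediam_le_of_edist_le ?_
    intro u v
    rcases eq_or_ne u v with rfl | huv
    · simp [SimpleGraph.edist_self]
    rcases eq_or_ne u.1 (Sum.inl 3) with hu | hu
    · have hu' : u = ⟨Sum.inl 3, hw⟩ := Subtype.ext hu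
      have hv' : v.1 ≠ Sum.inl 3 := fun h => huv (by rw [hu']; exact (Subtype.ext h).symm)
      have hW := SimpleGraph.edist_le
        (SimpleGraph.Walk.cons (hu' ▸ (adjw v hv').symm) SimpleGraph.Walk.nil :
          (starSub p).coe.Walk u v)
      simp only [SimpleGraph.Walk.length_cons, SimpleGraph.Walk.length_nil] at hW
      exact le_trans hW (by norm_num)
    rcases eq_or_ne v.1 (Sum.inl 3) with hv | hv
    · have hv' : v = ⟨Sum.inl 3, hw⟩ := Subtype.ext hv
      have hW := SimpleGraph.edist_le
        (SimpleGraph.Walk.cons (hv' ▸ adjw u hu) SimpleGraph.Walk.nil :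
          (starSub p).coe.Walk u v)
      simp only [SimpleGraph.Walk.length_cons, SimpleGraph.Walk.length_nil] at hW
      exact le_trans hW (by norm_num)
    · have hW := SimpleGraph.edist_le
        (SimpleGraph.Walk.cons (adjw u hu)
          (SimpleGraph.Walk.cons ((adjw v hv).symm) SimpleGraph.Walk.nil) :
          (starSub p).coe.Walk u v)
      simp only [SimpleGraph.Walk.length_cons, SimpleGraph.Walk.length_nil] at hW
      exact le_trans hW (by norm_num)
  have hge : 2 ≤ (starSub p).coe.ediam := by
    obtain ⟨u, v, hne, hnadj⟩ := starSub_not_adj hp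
    have h0 : (starSub p).coe.edist u v ≠ 0 :=
      fun h => hne (SimpleGraph.edist_eq_zero_iff.mp h)
    have h1 : (starSub p).coe.edist u v ≠ 1 :=
      fun h => hnadj (SimpleGraph.edist_eq_one_iff_adj.mp h)
    have h2 : 1 < (starSub p).coe.edist u v :=
      lt_of_le_of_ne (ENat.one_le_iff_ne_zero.mpr h0) (Ne.symm h1)
    have h3 : (1 : ℕ∞) + 1 ≤ (starSub p).coe.edist u v :=
      (ENat.add_one_le_iff (by norm_num)).mpr h2
    refine le_trans (by norm_num : (2:ℕ∞) ≤ 1+1) (le_trans h3 ?_)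
    exact SimpleGraph.edist_le_ediam
  have hediam : (starSub p).coe.ediam = 2 := le_antisymm hle hge
  rw [SimpleGraph.diam, hediam]
  rfl

/-! ### Local density upper bound machinery -/

lemma ceilDiv_le_of_le_mul {n d q : ℕ} (hd : 1 ≤ d) (h : n - 1 ≤ q * d) :
    (n - 1) ⌈/⌉ d ≤ q := by
  rw [Nat.ceilDiv_eq_add_pred_div]
  refine Nat.lt_succ_iff.mp (Nat.div_lt_iff_lt_mul (by omega) |>.mpr ?_)
  have h2 : Nat.succ q * d = q * d + d := by rw [Nat.succ_mul]
  omega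

lemma walk_bound {p : ℕ} (hp : 4 ≤ p) (H : (Rgraph p).Subgraph) :
    ∀ {u v : H.verts} (W : H.coe.Walk u v),
      (lab p u.1 - lab p v.1).natAbs ≤ p * W.length := by
  intro u v W
  induction W with
  | nil => simp
  | @cons a b c h W ih =>
    have h1 : (lab p a.1 - lab p b.1).natAbs ≤ p :=
      lab_bound hp (H.coe_adj_sub _ _ h)
    calc (lab p a.1 - lab p c.1).natAbs
        = ((lab p a.1 - lab p b.1) + (lab p b.1 - lab p c.1)).natAbs := by ring_nf
      _ ≤ (lab p a.1 - lab p b.1).natAbs + (lab p b.1 - lab p c.1).natAbs :=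
          Int.natAbs_add_le _ _
      _ ≤ p + p * W.length := Nat.add_le_add h1 ih
      _ = p * (SimpleGraph.Walk.cons h W).length := by
          rw [SimpleGraph.Walk.length_cons, Nat.mul_succ]; ring

lemma density_mem_le {p : ℕ} (hp : 4 ≤ p) :
    ∀ d ∈ {d | ∃ H : (Rgraph p).Subgraph, H.coe.Connected ∧ 2 ≤ H.verts.ncard ∧
      d = (H.verts.ncard - 1) ⌈/⌉ H.coe.diam}, d ≤ p := by
  rintro d ⟨H, hconn, hn, rfl⟩
  have hfin : H.verts.Finite := Set.toFinite _
  obtain ⟨u, v, hu, hv, huv⟩ := (Set.one_lt_ncard_iff hfin).mp (by omega)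
  haveI : Nonempty H.verts := ⟨⟨u, hu⟩⟩
  have hediam : H.coe.ediam ≠ ⊤ := by
    obtain ⟨a, b, hab⟩ := SimpleGraph.exists_edist_eq_ediam_of_finite (G := H.coe)
    rw [← hab, SimpleGraph.edist_ne_top_iff_reachable]
    exact hconn a b
  have hdm1 : 1 ≤ H.coe.diam := by
    have h1 : H.coe.dist ⟨u, hu⟩ ⟨v, hv⟩ ≤ H.coe.diam := SimpleGraph.dist_le_diam hediam
    have h2 : H.coe.dist ⟨u, hu⟩ ⟨v, hv⟩ ≠ 0 := by
      rw [SimpleGraph.dist_ne_zero_iff_ne_and_reachable]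
      exact ⟨fun h => huv (Subtype.ext_iff.mp h), hconn _ _⟩
    omega
  have key : ∀ a, a ∈ H.verts → ∀ b, b ∈ H.verts →
      (lab p a - lab p b).natAbs ≤ p * H.coe.diam := by
    intro a ha b hb2
    obtain ⟨W, hW⟩ := hconn.exists_walk_length_eq_dist ⟨a, ha⟩ ⟨b, hb2⟩
    have h1 := walk_bound hp H W
    rw [hW] at h1
    exact h1.trans (Nat.mul_le_mul_left p (SimpleGraph.dist_le_diam hediam))
  obtain ⟨u0, hu0, hmin⟩ := Set.exists_min_image H.verts (lab p) hfin ⟨u, hu⟩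
  have himg : lab p '' H.verts ⊆ Set.Icc (lab p u0) (lab p u0 + (p * H.coe.diam : ℕ)) := by
    rintro y ⟨a, ha, rfl⟩
    refine ⟨hmin a ha, ?_⟩
    have := key a ha u0 hu0
    omega
  have hcard : H.verts.ncard ≤ p * H.coe.diam + 1 := by
    have h1 : (lab p '' H.verts).ncard = H.verts.ncard :=
      Set.ncard_image_of_injOn ((lab_inj hp).injOn)
    have h2 := Set.ncard_le_ncard himg (Set.finite_Icc _ _)
    have h3 : (Set.Icc (lab p u0) (lab p u0 + (p * H.coe.diam : ℕ))).ncard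
        = p * H.coe.diam + 1 := by
      rw [← Finset.coe_Icc, Set.ncard_coe_finset, Int.card_Icc]
      omega
    omega
  exact ceilDiv_le_of_le_mul hdm1 (by omega)

/-- For `p ≥ 4`, the reflector `R_p` has bandwidth exactly `p`, and its local density
is also `p`. -/
theorem bandwidth_Rgraph (p : ℕ) (hp : 4 ≤ p) :
    bandwidth (Rgraph p) = p ∧ localDensity (Rgraph p) = p := by
  have hbw_le : bandwidth (Rgraph p) ≤ p := by
    have h1 : bwOf (Rgraph p) (lab p) ≤ p :=
      bwOf_le _ _ (fun u v h => lab_bound hp h)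
    exact le_trans (Nat.sInf_le ⟨lab p, lab_inj hp, rfl⟩) h1
  have hbw_ge : p ≤ bandwidth (Rgraph p) := by
    refine le_csInf ⟨bwOf (Rgraph p) (lab p), lab p, lab_inj hp, rfl⟩ ?_
    rintro n ⟨f, hf, rfl⟩
    exact p_le_bwOf hp f hf
  have hld_mem : p ∈ {d | ∃ H : (Rgraph p).Subgraph, H.coe.Connected ∧ 2 ≤ H.verts.ncard ∧
      d = (H.verts.ncard - 1) ⌈/⌉ H.coe.diam} := by
    refine ⟨starSub p, starSub_conn, ?_, ?_⟩
    · rw [starSub_ncard]; omega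
    · rw [starSub_ncard, starSub_diam hp, Nat.ceilDiv_eq_add_pred_div]
      omega
  have hld : localDensity (Rgraph p) = p := by
    refine le_antisymm (csSup_le' (density_mem_le hp)) ?_
    exact le_csSup ⟨p, density_mem_le hp⟩ hld_mem
  exact ⟨le_antisymm hbw_le hbw_ge, hld⟩
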